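/- Let A₁, A₂ be C-hyperideals of commutative multiplicative hyperrings G₁, G₂ respectively, and S₁, S₂ multiplicative closed subsets of G₁, G₂. Then A₁ × A₂ is a strongly quasi (S₁ × S₂)-primary hyperideal of G₁ × G₂ if and only if either A₂ is a strongly quasi S₂-primary hyperideal of G₂ and S₁ ∩ A₁ ≠ ∅, or A₁ is a strongly quasi S₁-primary hyperideal of G₁ and S₂ ∩ A₂ ≠ ∅. -/

import Mathlib

open Set

/-- A commutative multiplicative hyperring: a commutative additive group with a
commutative, associative hyperoperation `hmul` satisfying `(-a)∘b = -(a∘b)`,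
weak distributivity, and having an identity element `e` with `a ∈ e∘a`. -/
class MulHyperring (G : Type*) extends AddCommGroup G where
  hmul : G → G → Set G
  hmul_nonempty : ∀ a b : G, (hmul a b).Nonempty
  hmul_comm : ∀ a b : G, hmul a b = hmul b a
  hmul_assoc : ∀ a b c : G, (⋃ x ∈ hmul a b, hmul x c) = ⋃ x ∈ hmul b c, hmul a x
  neg_hmul : ∀ a b : G, hmul (-a) b = (fun x => -x) '' (hmul a b)
  hmul_add : ∀ a b c : G,
    hmul a (b + c) ⊆ {x | ∃ u ∈ hmul a b, ∃ v ∈ hmul a c, x = u + v}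
  e : G
  e_mem : ∀ a : G, a ∈ hmul e a

namespace MulHyperring

variable {G : Type*} [MulHyperring G]

/-- Hyperproduct of an element with a set: `a ∘ B = ⋃ b ∈ B, a ∘ b`. -/
def smulSet (a : G) (B : Set G) : Set G := ⋃ b ∈ B, hmul a b

/-- Hyperproduct of two sets. -/
def setMul (A B : Set G) : Set G := ⋃ a ∈ A, ⋃ b ∈ B, hmul a b

/-- Hyperproduct `a₁ ∘ a₂ ∘ ⋯ ∘ aₙ` of a (nonempty) list of elements. -/
def hProd : List G → Set G
  | [] => ∅
  | [a] => {a}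
  | a :: b :: l => smulSet a (hProd (b :: l))

/-- `aⁿ` as a hyperproduct. -/
def hPow (a : G) (n : ℕ) : Set G := hProd (List.replicate n a)

/-- `A` is a hyperideal of `G`. -/
def IsHyperideal (A : Set G) : Prop :=
  A.Nonempty ∧ (∀ x ∈ A, ∀ y ∈ A, x - y ∈ A) ∧ ∀ r : G, ∀ x ∈ A, hmul r x ⊆ A

/-- `A` is a `C`-hyperideal: any finite hyperproduct meeting `A` is contained in `A`. -/
def IsCHyperideal (A : Set G) : Prop :=
  IsHyperideal A ∧ ∀ l : List G, l ≠ [] → (hProd l ∩ A).Nonempty → hProd l ⊆ A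

/-- The radical of a (C-)hyperideal: `{a | aⁿ ⊆ A for some n ≥ 1}`. -/
def rad (A : Set G) : Set G := {a | ∃ n : ℕ, 1 ≤ n ∧ hPow a n ⊆ A}

/-- The hyperideal generated by a set. -/
def idealGen (X : Set G) : Set G := ⋂₀ {A | IsHyperideal A ∧ X ⊆ A}

/-- The hyperideal product of two hyperideals. -/
def idealMul (A B : Set G) : Set G := idealGen (setMul A B)

/-- Multiplicative closed subset. -/
def IsMCS (S : Set G) : Prop :=
  e ∈ S ∧ ∀ s₁ ∈ S, ∀ s₂ ∈ S, (hmul s₁ s₂ ∩ S).Nonempty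

/-- Prime hyperideal. -/
def IsPrime (P : Set G) : Prop :=
  IsHyperideal P ∧ P ≠ univ ∧ ∀ x y : G, hmul x y ⊆ P → x ∈ P ∨ y ∈ P

/-- `S`-prime hyperideal. -/
def IsSPrime (S A : Set G) : Prop :=
  IsHyperideal A ∧ A ∩ S = ∅ ∧
    ∃ t ∈ S, ∀ u v : G, hmul u v ⊆ A → hmul t u ⊆ A ∨ hmul t v ⊆ A

/-- `S`-primary hyperideal. -/
def IsSPrimary (S A : Set G) : Prop :=
  IsHyperideal A ∧ A ∩ S = ∅ ∧
    ∃ t ∈ S, ∀ u v : G, hmul u v ⊆ A → hmul t u ⊆ A ∨ hmul t v ⊆ rad A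

/-- Quasi `S`-primary hyperideal. -/
def IsQuasiSPrimary (S A : Set G) : Prop :=
  IsHyperideal A ∧ A ∩ S = ∅ ∧
    ∃ t ∈ S, ∀ u v : G, hmul u v ⊆ A → hmul t u ⊆ rad A ∨ hmul t v ⊆ rad A

/-- Weakly quasi `S`-primary hyperideal. -/
def IsWeaklyQuasiSPrimary (S A : Set G) : Prop :=
  IsHyperideal A ∧ A ∩ S = ∅ ∧
    ∃ t ∈ S, ∀ u v : G, 0 ∉ hmul u v → hmul u v ⊆ A →
      hmul t u ⊆ rad A ∨ hmul t v ⊆ rad A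

/-- Strongly quasi `S`-primary hyperideal. -/
def IsStronglyQuasiSPrimary (S A : Set G) : Prop :=
  IsHyperideal A ∧ A ∩ S = ∅ ∧
    ∃ t ∈ S, ∀ u v : G, hmul u v ⊆ A →
      smulSet t (hPow u 2) ⊆ A ∨ hmul t v ⊆ rad A

/-- The residual `(B : x) = {y | y ∘ x ⊆ B}`. -/
def colon (B : Set G) (x : G) : Set G := {y | hmul y x ⊆ B}

end MulHyperring

namespace MulHyperring

variable {G₁ G₂ : Type*} [MulHyperring G₁] [MulHyperring G₂]

/-- The product of two commutative multiplicative hyperrings. -/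
instance prodMulHyperring : MulHyperring (G₁ × G₂) where
  hmul a b := (hmul a.1 b.1) ×ˢ (hmul a.2 b.2)
  hmul_nonempty a b := (hmul_nonempty a.1 b.1).prod (hmul_nonempty a.2 b.2)
  hmul_comm a b := by rw [hmul_comm a.1 b.1, hmul_comm a.2 b.2]
  hmul_assoc a b c := by
    ext x
    have h₁ := Set.ext_iff.mp (hmul_assoc a.1 b.1 c.1) x.1
    have h₂ := Set.ext_iff.mp (hmul_assoc a.2 b.2 c.2) x.2
    simp only [Set.mem_iUnion, Set.mem_prod, exists_prop] at *
    constructor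
    · rintro ⟨y, ⟨hy1, hy2⟩, hx1, hx2⟩
      obtain ⟨z₁, hz₁, hz₁'⟩ := h₁.mp ⟨y.1, hy1, hx1⟩
      obtain ⟨z₂, hz₂, hz₂'⟩ := h₂.mp ⟨y.2, hy2, hx2⟩
      exact ⟨(z₁, z₂), ⟨hz₁, hz₂⟩, hz₁', hz₂'⟩
    · rintro ⟨y, ⟨hy1, hy2⟩, hx1, hx2⟩
      obtain ⟨z₁, hz₁, hz₁'⟩ := h₁.mpr ⟨y.1, hy1, hx1⟩
      obtain ⟨z₂, hz₂, hz₂'⟩ := h₂.mpr ⟨y.2, hy2, hx2⟩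
      exact ⟨(z₁, z₂), ⟨hz₁, hz₂⟩, hz₁', hz₂'⟩
  neg_hmul a b := by
    ext x
    have h₁ := Set.ext_iff.mp (neg_hmul a.1 b.1) x.1
    have h₂ := Set.ext_iff.mp (neg_hmul a.2 b.2) x.2
    simp only [Set.mem_prod, Set.mem_image, Prod.fst_neg, Prod.snd_neg] at *
    constructor
    · rintro ⟨hx1, hx2⟩
      obtain ⟨u₁, hu₁, hu₁'⟩ := h₁.mp hx1
      obtain ⟨u₂, hu₂, hu₂'⟩ := h₂.mp hx2
      exact ⟨(u₁, u₂), ⟨hu₁, hu₂⟩, Prod.ext hu₁' hu₂'⟩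
    · rintro ⟨u, ⟨hu1, hu2⟩, hux⟩
      subst hux
      exact ⟨h₁.mpr ⟨u.1, hu1, rfl⟩, h₂.mpr ⟨u.2, hu2, rfl⟩⟩
  hmul_add a b c := by
    rintro ⟨x₁, x₂⟩ ⟨hx1, hx2⟩
    obtain ⟨u₁, hu₁, v₁, hv₁, h₁⟩ := hmul_add a.1 b.1 c.1 hx1
    obtain ⟨u₂, hu₂, v₂, hv₂, h₂⟩ := hmul_add a.2 b.2 c.2 hx2
    exact ⟨(u₁, u₂), ⟨hu₁, hu₂⟩, (v₁, v₂), ⟨hv₁, hv₂⟩, Prod.ext h₁ h₂⟩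
  e := (e, e)
  e_mem a := ⟨e_mem a.1, e_mem a.2⟩

end MulHyperring

/-!
Testing the product condition on `(a₁, e) ∘ (e, a₂) ⊆ A₁ × A₂` with the witness `(t₁, t₂)` forces
either `t₂ ∈ A₂` or `t₁ ∈ rad A₁`; in the second case some power of `t₁` meets `S₁` inside `A₁`.
So one factor, say `A₂`, meets its multiplicative set, and then `A₁ × A₂` is strongly quasi
`(S₁ × S₂)`-primary exactly when `A₁` is strongly quasi `S₁`-primary: test pairs `(u, 0), (v, 0)`
in one direction, and in the other take the witness `(t₁, s)` with `s ∈ S₂ ∩ A₂`, which absorbs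
everything in the second coordinate.
-/

namespace MulHyperring

section Basic

variable {G : Type*} [MulHyperring G]

lemma mem_smulSet {a x : G} {B : Set G} : x ∈ smulSet a B ↔ ∃ b ∈ B, x ∈ hmul a b := by
  simp [smulSet]

lemma hmul_subset_smulSet (a : G) {b : G} {B : Set G} (hb : b ∈ B) : hmul a b ⊆ smulSet a B :=
  fun _ hx => mem_smulSet.2 ⟨b, hb, hx⟩

lemma smulSet_nonempty (a : G) {B : Set G} (hB : B.Nonempty) : (smulSet a B).Nonempty :=
  let ⟨_, hb⟩ := hB
  (hmul_nonempty a _).mono (hmul_subset_smulSet a hb)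

lemma mem_of_hmul_e_subset {a : G} {B : Set G} (h : hmul a e ⊆ B) : a ∈ B :=
  h (hmul_comm a e ▸ e_mem a)

lemma hProd_nonempty : ∀ l : List G, l ≠ [] → (hProd l).Nonempty
  | [a], _ => singleton_nonempty a
  | a :: b :: l, _ => smulSet_nonempty a (hProd_nonempty (b :: l) (List.cons_ne_nil b l))

lemma hPow_one (a : G) : hPow a 1 = {a} := rfl

lemma hPow_succ (a : G) {n : ℕ} (hn : 1 ≤ n) : hPow a (n + 1) = smulSet a (hPow a n) := by
  obtain ⟨k, rfl⟩ := Nat.exists_eq_add_of_le' hn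
  rfl

lemma hPow_nonempty (a : G) {n : ℕ} (hn : 1 ≤ n) : (hPow a n).Nonempty :=
  hProd_nonempty _ (by simpa [List.replicate_eq_nil_iff] using Nat.one_le_iff_ne_zero.1 hn)

lemma e_mem_hPow_two : (e : G) ∈ hPow e 2 := by
  rw [hPow_succ (e : G) le_rfl, hPow_one]
  exact hmul_subset_smulSet e (mem_singleton e) (e_mem e)

namespace IsHyperideal

variable {A : Set G}

lemma zero_mem (hA : IsHyperideal A) : (0 : G) ∈ A :=
  let ⟨a, ha⟩ := hA.1
  sub_self a ▸ hA.2.1 a ha a ha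

lemma hmul_subset_left (hA : IsHyperideal A) (r : G) {a : G} (ha : a ∈ A) : hmul r a ⊆ A :=
  hA.2.2 r a ha

lemma hmul_subset_right (hA : IsHyperideal A) {a : G} (ha : a ∈ A) (r : G) : hmul a r ⊆ A :=
  hmul_comm a r ▸ hA.hmul_subset_left r ha

lemma smulSet_subset (hA : IsHyperideal A) {a : G} (ha : a ∈ A) (B : Set G) :
    smulSet a B ⊆ A := fun _ hx =>
  let ⟨b, _, hxb⟩ := mem_smulSet.1 hx
  hA.hmul_subset_right ha b hxb

lemma smulSet_subset_of_subset (hA : IsHyperideal A) (a : G) {B : Set G} (hB : B ⊆ A) :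
    smulSet a B ⊆ A := fun _ hx =>
  let ⟨_, hb, hxb⟩ := mem_smulSet.1 hx
  hA.hmul_subset_left a (hB hb) hxb

lemma hPow_subset_of_le (hA : IsHyperideal A) {a : G} {n m : ℕ} (hn : 1 ≤ n) (hnm : n ≤ m)
    (h : hPow a n ⊆ A) : hPow a m ⊆ A := by
  induction m, hnm using Nat.le_induction with
  | base => exact h
  | succ m hnm ih => rw [hPow_succ a (hn.trans hnm)]; exact hA.smulSet_subset_of_subset a ih

end IsHyperideal

lemma subset_rad (A : Set G) : A ⊆ rad A := fun a ha =>
  ⟨1, le_rfl, by rwa [hPow_one, singleton_subset_iff]⟩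

lemma IsMCS.hPow_inter_nonempty {S : Set G} (hS : IsMCS S) {s : G} (hs : s ∈ S) {n : ℕ}
    (hn : 1 ≤ n) : (hPow s n ∩ S).Nonempty := by
  induction n, hn using Nat.le_induction with
  | base => exact ⟨s, rfl, hs⟩
  | succ n hn ih =>
    obtain ⟨x, hx, hxS⟩ := ih
    obtain ⟨y, hy, hyS⟩ := hS.2 s hs x hxS
    exact ⟨y, hPow_succ s hn ▸ hmul_subset_smulSet s hx hy, hyS⟩

lemma IsMCS.inter_nonempty_of_mem_rad {S A : Set G} (hS : IsMCS S) {s : G} (hs : s ∈ S)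
    (hsA : s ∈ rad A) : (S ∩ A).Nonempty :=
  let ⟨_, hn, hpow⟩ := hsA
  let ⟨x, hx, hxS⟩ := hS.hPow_inter_nonempty hs hn
  ⟨x, hxS, hpow hx⟩

end Basic

section Prod

variable {G₁ G₂ : Type*} [MulHyperring G₁] [MulHyperring G₂]

lemma hmul_prod (p q : G₁ × G₂) : hmul p q = hmul p.1 q.1 ×ˢ hmul p.2 q.2 := rfl

lemma smulSet_prod (p : G₁ × G₂) (X : Set G₁) (Y : Set G₂) :
    smulSet p (X ×ˢ Y) = smulSet p.1 X ×ˢ smulSet p.2 Y := by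
  ext x
  simp only [mem_smulSet, mem_prod, hmul_prod, Prod.exists]
  constructor
  · rintro ⟨b₁, b₂, ⟨hb₁, hb₂⟩, hx₁, hx₂⟩
    exact ⟨⟨b₁, hb₁, hx₁⟩, ⟨b₂, hb₂, hx₂⟩⟩
  · rintro ⟨⟨b₁, hb₁, hx₁⟩, ⟨b₂, hb₂, hx₂⟩⟩
    exact ⟨b₁, b₂, ⟨hb₁, hb₂⟩, hx₁, hx₂⟩

lemma hPow_prod (p : G₁ × G₂) {n : ℕ} (hn : 1 ≤ n) :
    hPow p n = hPow p.1 n ×ˢ hPow p.2 n := by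
  induction n, hn using Nat.le_induction with
  | base => simp only [hPow_one, singleton_prod_singleton]
  | succ n hn ih => rw [hPow_succ _ hn, hPow_succ _ hn, hPow_succ _ hn, ih, smulSet_prod]

variable {A₁ : Set G₁} {A₂ : Set G₂}

lemma hmul_subset_prod_iff (p q : G₁ × G₂) :
    hmul p q ⊆ A₁ ×ˢ A₂ ↔ hmul p.1 q.1 ⊆ A₁ ∧ hmul p.2 q.2 ⊆ A₂ :=
  prod_subset_prod_iff' ((hmul_nonempty _ _).prod (hmul_nonempty _ _))

lemma smulSet_hPow_subset_prod_iff (t u : G₁ × G₂) {n : ℕ} (hn : 1 ≤ n) :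
    smulSet t (hPow u n) ⊆ A₁ ×ˢ A₂ ↔
      smulSet t.1 (hPow u.1 n) ⊆ A₁ ∧ smulSet t.2 (hPow u.2 n) ⊆ A₂ := by
  rw [hPow_prod u hn, smulSet_prod]
  exact prod_subset_prod_iff' ((smulSet_nonempty _ (hPow_nonempty _ hn)).prod
    (smulSet_nonempty _ (hPow_nonempty _ hn)))

lemma IsHyperideal.prod (h₁ : IsHyperideal A₁) (h₂ : IsHyperideal A₂) :
    IsHyperideal (A₁ ×ˢ A₂) := by
  refine ⟨h₁.1.prod h₂.1, fun x hx y hy => ⟨h₁.2.1 _ hx.1 _ hy.1, h₂.2.1 _ hx.2 _ hy.2⟩,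
    fun r x hx => ?_⟩
  exact (hmul_subset_prod_iff r x).2 ⟨h₁.hmul_subset_left _ hx.1, h₂.hmul_subset_left _ hx.2⟩

lemma rad_prod (h₁ : IsHyperideal A₁) (h₂ : IsHyperideal A₂) :
    rad (A₁ ×ˢ A₂) = rad A₁ ×ˢ rad A₂ := by
  ext p
  constructor
  · rintro ⟨n, hn, h⟩
    rw [hPow_prod p hn] at h
    have hne := (hPow_nonempty p.1 hn).prod (hPow_nonempty p.2 hn)
    obtain ⟨h₁n, h₂n⟩ := (prod_subset_prod_iff' hne).1 h
    exact ⟨⟨n, hn, h₁n⟩, ⟨n, hn, h₂n⟩⟩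
  · rintro ⟨⟨n₁, hn₁, h₁n⟩, ⟨n₂, hn₂, h₂n⟩⟩
    have hn : 1 ≤ max n₁ n₂ := hn₁.trans (le_max_left _ _)
    refine ⟨max n₁ n₂, hn, ?_⟩
    rw [hPow_prod p hn]
    exact prod_mono (h₁.hPow_subset_of_le hn₁ (le_max_left _ _) h₁n)
      (h₂.hPow_subset_of_le hn₂ (le_max_right _ _) h₂n)

variable {S₁ : Set G₁} {S₂ : Set G₂}

lemma IsStronglyQuasiSPrimary.inter_nonempty_of_prod
    (h : IsStronglyQuasiSPrimary (S₁ ×ˢ S₂) (A₁ ×ˢ A₂)) (h₁ : IsHyperideal A₁)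
    (h₂ : IsHyperideal A₂) (hS₁ : IsMCS S₁) : (S₁ ∩ A₁).Nonempty ∨ (S₂ ∩ A₂).Nonempty := by
  obtain ⟨-, -, t, ⟨ht₁, ht₂⟩, ht⟩ := h
  obtain ⟨a₁, ha₁⟩ := h₁.1
  obtain ⟨a₂, ha₂⟩ := h₂.1
  have hmem : hmul ((a₁, e) : G₁ × G₂) (e, a₂) ⊆ A₁ ×ˢ A₂ :=
    (hmul_subset_prod_iff _ _).2 ⟨h₁.hmul_subset_right ha₁ e, h₂.hmul_subset_left e ha₂⟩
  rcases ht _ _ hmem with hsq | hrad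
  · have hsq₂ := ((smulSet_hPow_subset_prod_iff t _ (by norm_num)).1 hsq).2
    exact Or.inr ⟨t.2, ht₂,
      mem_of_hmul_e_subset ((hmul_subset_smulSet t.2 e_mem_hPow_two).trans hsq₂)⟩
  · rw [rad_prod h₁ h₂, hmul_subset_prod_iff] at hrad
    exact Or.inl (hS₁.inter_nonempty_of_mem_rad ht₁ (mem_of_hmul_e_subset hrad.1))

lemma isStronglyQuasiSPrimary_prod_iff_fst (h₁ : IsHyperideal A₁) (h₂ : IsHyperideal A₂)
    (hS₂ : (S₂ ∩ A₂).Nonempty) :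
    IsStronglyQuasiSPrimary (S₁ ×ˢ S₂) (A₁ ×ˢ A₂) ↔ IsStronglyQuasiSPrimary S₁ A₁ := by
  obtain ⟨s, hsS, hsA⟩ := hS₂
  constructor
  · rintro ⟨-, hdisj, t, ⟨ht₁, -⟩, ht⟩
    rw [prod_inter_prod, prod_eq_empty_iff] at hdisj
    refine ⟨h₁, hdisj.resolve_right (nonempty_iff_ne_empty.1 ⟨s, hsA, hsS⟩), t.1, ht₁,
      fun u v huv => ?_⟩
    have hmem : hmul ((u, 0) : G₁ × G₂) (v, 0) ⊆ A₁ ×ˢ A₂ :=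
      (hmul_subset_prod_iff _ _).2 ⟨huv, h₂.hmul_subset_left 0 h₂.zero_mem⟩
    have htest := ht _ _ hmem
    rw [smulSet_hPow_subset_prod_iff _ _ (by norm_num), rad_prod h₁ h₂,
      hmul_subset_prod_iff] at htest
    exact htest.imp And.left And.left
  · rintro ⟨-, hdisj, t₁, ht₁, ht⟩
    refine ⟨h₁.prod h₂, by rw [prod_inter_prod, hdisj, empty_prod], (t₁, s), ⟨ht₁, hsS⟩,
      fun u v huv => ?_⟩
    rw [smulSet_hPow_subset_prod_iff _ _ (by norm_num), rad_prod h₁ h₂, hmul_subset_prod_iff]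
    exact (ht _ _ ((hmul_subset_prod_iff u v).1 huv).1).imp
      (fun hsq => ⟨hsq, h₂.smulSet_subset hsA _⟩)
      (fun hrad => ⟨hrad, (h₂.hmul_subset_right hsA _).trans (subset_rad A₂)⟩)

lemma isStronglyQuasiSPrimary_prod_iff_snd (h₁ : IsHyperideal A₁) (h₂ : IsHyperideal A₂)
    (hS₁ : (S₁ ∩ A₁).Nonempty) :
    IsStronglyQuasiSPrimary (S₁ ×ˢ S₂) (A₁ ×ˢ A₂) ↔ IsStronglyQuasiSPrimary S₂ A₂ := by
  obtain ⟨s, hsS, hsA⟩ := hS₁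
  constructor
  · rintro ⟨-, hdisj, t, ⟨-, ht₂⟩, ht⟩
    rw [prod_inter_prod, prod_eq_empty_iff] at hdisj
    refine ⟨h₂, hdisj.resolve_left (nonempty_iff_ne_empty.1 ⟨s, hsA, hsS⟩), t.2, ht₂,
      fun u v huv => ?_⟩
    have hmem : hmul (((0 : G₁), u) : G₁ × G₂) (0, v) ⊆ A₁ ×ˢ A₂ :=
      (hmul_subset_prod_iff _ _).2 ⟨h₁.hmul_subset_left 0 h₁.zero_mem, huv⟩
    have htest := ht _ _ hmem
    rw [smulSet_hPow_subset_prod_iff _ _ (by norm_num), rad_prod h₁ h₂,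
      hmul_subset_prod_iff] at htest
    exact htest.imp And.right And.right
  · rintro ⟨-, hdisj, t₂, ht₂, ht⟩
    refine ⟨h₁.prod h₂, by rw [prod_inter_prod, hdisj, prod_empty], (s, t₂), ⟨hsS, ht₂⟩,
      fun u v huv => ?_⟩
    rw [smulSet_hPow_subset_prod_iff _ _ (by norm_num), rad_prod h₁ h₂, hmul_subset_prod_iff]
    exact (ht _ _ ((hmul_subset_prod_iff u v).1 huv).2).imp
      (fun hsq => ⟨h₁.smulSet_subset hsA _, hsq⟩)
      (fun hrad => ⟨(h₁.hmul_subset_right hsA _).trans (subset_rad A₁), hrad⟩)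

end Prod

end MulHyperring

open MulHyperring in
theorem stronglyQuasiSPrimary_prod_general {G₁ G₂ : Type*} [MulHyperring G₁] [MulHyperring G₂]
    (A₁ S₁ : Set G₁) (A₂ S₂ : Set G₂) (hA₁ : IsCHyperideal A₁) (hA₂ : IsCHyperideal A₂)
    (hS₁ : IsMCS S₁) :
    IsStronglyQuasiSPrimary (S₁ ×ˢ S₂) (A₁ ×ˢ A₂) ↔
      (IsStronglyQuasiSPrimary S₂ A₂ ∧ (S₁ ∩ A₁).Nonempty) ∨
      (IsStronglyQuasiSPrimary S₁ A₁ ∧ (S₂ ∩ A₂).Nonempty) := by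
  constructor
  · intro h
    rcases h.inter_nonempty_of_prod hA₁.1 hA₂.1 hS₁ with hS | hS
    · exact Or.inl ⟨(isStronglyQuasiSPrimary_prod_iff_snd hA₁.1 hA₂.1 hS).1 h, hS⟩
    · exact Or.inr ⟨(isStronglyQuasiSPrimary_prod_iff_fst hA₁.1 hA₂.1 hS).1 h, hS⟩
  · rintro (⟨h, hS⟩ | ⟨h, hS⟩)
    · exact (isStronglyQuasiSPrimary_prod_iff_snd hA₁.1 hA₂.1 hS).2 h
    · exact (isStronglyQuasiSPrimary_prod_iff_fst hA₁.1 hA₂.1 hS).2 h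

open MulHyperring in
theorem stronglyQuasiSPrimary_prod {G₁ G₂ : Type*} [MulHyperring G₁] [MulHyperring G₂]
    (A₁ S₁ : Set G₁) (A₂ S₂ : Set G₂) (hA₁ : IsCHyperideal A₁) (hA₂ : IsCHyperideal A₂)
    (hS₁ : IsMCS S₁) (hS₂ : IsMCS S₂) :
    IsStronglyQuasiSPrimary (S₁ ×ˢ S₂) (A₁ ×ˢ A₂) ↔
      (IsStronglyQuasiSPrimary S₂ A₂ ∧ (S₁ ∩ A₁).Nonempty) ∨
      (IsStronglyQuasiSPrimary S₁ A₁ ∧ (S₂ ∩ A₂).Nonempty) :=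
  stronglyQuasiSPrimary_prod_general A₁ S₁ A₂ S₂ hA₁ hA₂ hS₁
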